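/- arXiv:1909.13630 — 3 statements merged into one kernel-verified Lean document; each statement's English description precedes it below -/
import Mathlib

section
/- Let ρ be a pure density matrix on ℂ^d ⊗ ℂ^d ⊗ ℂ^d. Then Σ_{i,j,l}(t_{ijl}^{(1,2,3)})² ≤ 8(d³−1)/d³; equivalently, the Frobenius norm of the full correlation tensor satisfies ‖T^{(1,2,3)}‖ ≤ (2/d)·√(2(d³−1)/d). -/
/-!
For the Hilbert–Schmidt inner product `⟪A, B⟫ = tr (Aᴴ B)`, the identity and the product
operators `λ_{a 0} ⊗ ⋯ ⊗ λ_{a (n-1)}` are pairwise orthogonal, of squared norms `dⁿ` and `2ⁿ`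
(the `λ_i` are traceless and `tr (λ_i λ_j) = 2 δ_ij`). Bessel's inequality for `ρ` against this
family reads `|tr ρ|² / dⁿ + Σ_a t_a² / 2ⁿ ≤ tr ρ²`, and a pure state has `tr ρ = tr ρ² = 1`.
-/

open Matrix ComplexOrder

/-- The full `n`-body correlation tensor entry `t_{a 0, …, a (n-1)}` of `ρ`,
i.e. `tr (ρ · (λ_{a 0} ⊗ ⋯ ⊗ λ_{a (n-1)}))`. -/
noncomputable def corrFull {n d : ℕ} (lam : Fin (d ^ 2 - 1) → Matrix (Fin d) (Fin d) ℂ)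
    (ρ : Matrix (Fin n → Fin d) (Fin n → Fin d) ℂ) (a : Fin n → Fin (d ^ 2 - 1)) : ℝ :=
  (Matrix.trace (ρ * Matrix.of (fun v w : Fin n → Fin d => ∏ j, lam (a j) (v j) (w j)))).re

namespace Matrix

section PiKronecker

variable {ι l m n R : Type*} [Fintype ι]

def piKronecker [CommMonoid R] (f : ι → Matrix m n R) : Matrix (ι → m) (ι → n) R :=
  of fun v w => ∏ j, f j (v j) (w j)

theorem piKronecker_mul [CommSemiring R] [DecidableEq ι] [Fintype m]
    (f : ι → Matrix l m R) (g : ι → Matrix m n R) :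
    piKronecker f * piKronecker g = piKronecker fun j => f j * g j := by
  ext v w
  simp only [piKronecker, mul_apply, of_apply, ← Finset.prod_mul_distrib]
  exact (Fintype.prod_sum fun j x => f j (v j) x * g j x (w j)).symm

theorem trace_piKronecker [CommSemiring R] [DecidableEq ι] [Fintype m] (f : ι → Matrix m m R) :
    (piKronecker f).trace = ∏ j, (f j).trace :=
  (Fintype.prod_sum fun j x => f j x x).symm

theorem conjTranspose_piKronecker [CommSemiring R] [StarRing R] (f : ι → Matrix m n R) :
    (piKronecker f)ᴴ = piKronecker fun j => (f j)ᴴ := by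
  ext v w
  simp [piKronecker, conjTranspose_apply]

end PiKronecker

section HilbertSchmidt

variable {ι κ m n 𝕜 : Type*} [RCLike 𝕜] [Fintype m] [Fintype n]

def toHilbertSchmidt (A : Matrix m n 𝕜) : EuclideanSpace 𝕜 (m × n) :=
  WithLp.toLp 2 fun p => A p.1 p.2

theorem inner_toHilbertSchmidt (A B : Matrix m n 𝕜) :
    inner 𝕜 (toHilbertSchmidt A) (toHilbertSchmidt B) = (Aᴴ * B).trace := by
  simp only [PiLp.inner_apply, RCLike.inner_apply', toHilbertSchmidt, trace,
    diag, mul_apply, conjTranspose_apply, Fintype.sum_prod_type]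
  exact Finset.sum_comm

theorem sum_norm_trace_conjTranspose_mul_sq_le [Fintype κ] [DecidableEq κ] (w : κ → Matrix m n 𝕜)
    (hw : ∀ a b, ((w a)ᴴ * w b).trace = if a = b then 1 else 0) (X : Matrix m n 𝕜) :
    ∑ a, ‖((w a)ᴴ * X).trace‖ ^ 2 ≤ RCLike.re (Xᴴ * X).trace := by
  have hortho : Orthonormal 𝕜 (toHilbertSchmidt ∘ w) := by
    rw [orthonormal_iff_ite]
    intro a b
    simp only [Function.comp_apply, inner_toHilbertSchmidt, hw]
  have := hortho.sum_inner_products_le (toHilbertSchmidt X) (s := Finset.univ)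
  simpa only [Function.comp_apply, inner_toHilbertSchmidt, ← inner_self_eq_norm_sq (𝕜 := 𝕜)]
    using this

theorem norm_trace_sq_div_card_add_sum_le [Fintype ι] [DecidableEq ι] [Nonempty ι] [Fintype κ]
    [DecidableEq κ] (B : κ → Matrix ι ι 𝕜) {c : ℝ} (hc : 0 < c)
    (hB : ∀ a b, ((B a)ᴴ * B b).trace = if a = b then (c : 𝕜) else 0)
    (hB₀ : ∀ a, (B a).trace = 0) (X : Matrix ι ι 𝕜) :
    ‖X.trace‖ ^ 2 / (Fintype.card ι : ℝ) + ∑ a, ‖((B a)ᴴ * X).trace‖ ^ 2 / c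
      ≤ RCLike.re (Xᴴ * X).trace := by
  set N : ℝ := (Fintype.card ι : ℝ)
  have hN : 0 < N := Nat.cast_pos.mpr Fintype.card_pos
  let w : Option κ → Matrix ι ι 𝕜 :=
    fun o => o.elim ((√N)⁻¹ • 1) fun a => (√c)⁻¹ • B a
  have hw : ∀ o o', ((w o)ᴴ * w o').trace = if o = o' then 1 else 0 := by
    have hscale : ∀ r : ℝ, 0 < r → ((√r)⁻¹ * (√r)⁻¹) • (r : 𝕜) = 1 := by
      intro r hr
      rw [← mul_inv, Real.mul_self_sqrt hr.le, RCLike.real_smul_eq_coe_mul, ← RCLike.ofReal_mul,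
        inv_mul_cancel₀ hr.ne', RCLike.ofReal_one]
    rintro (_ | a) (_ | b) <;>
      simp only [w, Option.elim_none, Option.elim_some, conjTranspose_smul, star_trivial,
        conjTranspose_one, smul_mul_smul, one_mul, mul_one, trace_smul, trace_one, hB, hB₀,
        trace_conjTranspose, star_zero, smul_zero, reduceCtorEq, if_false, Option.some.injEq]
    · simpa [N] using hscale N hN
    · split_ifs
      · exact hscale c hc
      · simp
  have := sum_norm_trace_conjTranspose_mul_sq_le w hw X
  have hnorm : ∀ r : ℝ, 0 < r → ∀ z : 𝕜, ‖(√r)⁻¹ • z‖ ^ 2 = ‖z‖ ^ 2 / r := by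
    intro r hr z
    rw [norm_smul, mul_pow, norm_inv, Real.norm_of_nonneg (Real.sqrt_nonneg r), inv_pow,
      Real.sq_sqrt hr.le, inv_mul_eq_div]
  simpa only [Fintype.sum_option, w, Option.elim_none, Option.elim_some, conjTranspose_smul,
    star_trivial, conjTranspose_one, one_mul, smul_mul, trace_smul, hnorm N hN, hnorm c hc]
    using this

end HilbertSchmidt

end Matrix

theorem sum_corrFull_sq_le {n d : ℕ} [NeZero n] [NeZero d]
    (lam : Fin (d ^ 2 - 1) → Matrix (Fin d) (Fin d) ℂ) (hherm : ∀ i, (lam i).IsHermitian)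
    (htr : ∀ i, (lam i).trace = 0)
    (horth : ∀ i j, (lam i * lam j).trace = if i = j then 2 else 0)
    (ρ : Matrix (Fin n → Fin d) (Fin n → Fin d) ℂ) (hρ : ρ.IsHermitian) (htrρ : ρ.trace = 1) :
    ∑ a, corrFull lam ρ a ^ 2 ≤ 2 ^ n * ((ρ * ρ).trace.re - 1 / (d : ℝ) ^ n) := by
  let B : (Fin n → Fin (d ^ 2 - 1)) → Matrix (Fin n → Fin d) (Fin n → Fin d) ℂ :=
    fun a => piKronecker fun j => lam (a j)
  have hB_herm (a) : (B a)ᴴ = B a := by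
    simp only [B, conjTranspose_piKronecker, (hherm _).eq]
  have hB_orth (a b) : ((B a)ᴴ * B b).trace = if a = b then ((2 ^ n : ℝ) : ℂ) else 0 := by
    simp [hB_herm, B, piKronecker_mul, trace_piKronecker, horth, Finset.prod_ite_zero,
      ← funext_iff]
  have hB₀ (a) : (B a).trace = 0 := by
    rw [trace_piKronecker]
    exact Finset.prod_eq_zero (Finset.mem_univ 0) (htr _)
  have hcorr (a) : corrFull lam ρ a ^ 2 ≤ ‖((B a)ᴴ * ρ).trace‖ ^ 2 := by
    rw [hB_herm, trace_mul_comm, ← sq_abs]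
    exact pow_le_pow_left₀ (abs_nonneg _) (Complex.abs_re_le_norm _) 2
  have hbessel := norm_trace_sq_div_card_add_sum_le B (c := 2 ^ n) (by positivity) hB_orth hB₀ ρ
  rw [htrρ, hρ.eq, norm_one, one_pow, Fintype.card_fun, Fintype.card_fin, Fintype.card_fin,
    Nat.cast_pow, ← Finset.sum_div] at hbessel
  calc ∑ a, corrFull lam ρ a ^ 2 ≤ ∑ a, ‖((B a)ᴴ * ρ).trace‖ ^ 2 :=
        Finset.sum_le_sum fun a _ => hcorr a
    _ ≤ 2 ^ n * ((ρ * ρ).trace.re - 1 / (d : ℝ) ^ n) :=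
        (div_le_iff₀' (by positivity)).mp (le_sub_iff_add_le'.mpr hbessel)

theorem sum_fin_three_arrow {K M : Type*} [Fintype K] [AddCommMonoid M] (f : (Fin 3 → K) → M) :
    ∑ a, f a = ∑ i, ∑ j, ∑ l, f ![i, j, l] := by
  simp only [← (Fin.consEquiv fun _ => K).sum_comp, Fintype.sum_prod_type, Fintype.sum_unique]
  rfl

/-- For a pure tripartite state, `Σ (t_{ijl}^{(1,2,3)})² ≤ 8(d³-1)/d³`; equivalently
`‖T^{(1,2,3)}‖ ≤ (2/d)·√(2(d³-1)/d)`. -/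
theorem full_correlation_bound_tripartite (d : ℕ) (hd : 2 ≤ d)
    (lam : Fin (d ^ 2 - 1) → Matrix (Fin d) (Fin d) ℂ)
    (hherm : ∀ i, (lam i).IsHermitian)
    (htr : ∀ i, (lam i).trace = 0)
    (horth : ∀ i j, (lam i * lam j).trace = if i = j then 2 else 0)
    (ρ : Matrix (Fin 3 → Fin d) (Fin 3 → Fin d) ℂ)
    (hpsd : ρ.PosSemidef) (htrρ : ρ.trace = 1) (hpure : ρ * ρ = ρ) :
    (∑ i, ∑ j, ∑ l, (corrFull lam ρ ![i, j, l]) ^ 2) ≤ 8 * ((d : ℝ) ^ 3 - 1) / (d : ℝ) ^ 3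
    ∧ Real.sqrt (∑ i, ∑ j, ∑ l, (corrFull lam ρ ![i, j, l]) ^ 2)
        ≤ (2 / (d : ℝ)) * Real.sqrt (2 * ((d : ℝ) ^ 3 - 1) / (d : ℝ)) := by
  have : NeZero d := ⟨by omega⟩
  have hpurity : (ρ * ρ).trace.re = 1 := by rw [hpure, htrρ, Complex.one_re]
  have hsum :
      (∑ i, ∑ j, ∑ l, (corrFull lam ρ ![i, j, l]) ^ 2) ≤ 8 * ((d : ℝ) ^ 3 - 1) / (d : ℝ) ^ 3 :=
    calc _ = ∑ a, corrFull lam ρ a ^ 2 := (sum_fin_three_arrow _).symm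
      _ ≤ 2 ^ 3 * ((ρ * ρ).trace.re - 1 / (d : ℝ) ^ 3) :=
        sum_corrFull_sq_le lam hherm htr horth ρ hpsd.isHermitian htrρ
      _ = 8 * ((d : ℝ) ^ 3 - 1) / (d : ℝ) ^ 3 := by
        rw [hpurity]
        field_simp
        ring
  refine ⟨hsum, ?_⟩
  calc Real.sqrt (∑ i, ∑ j, ∑ l, (corrFull lam ρ ![i, j, l]) ^ 2)
      ≤ Real.sqrt (8 * ((d : ℝ) ^ 3 - 1) / (d : ℝ) ^ 3) := Real.sqrt_le_sqrt hsum
    _ = (2 / (d : ℝ)) * Real.sqrt (2 * ((d : ℝ) ^ 3 - 1) / (d : ℝ)) := by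
      rw [show 8 * ((d : ℝ) ^ 3 - 1) / (d : ℝ) ^ 3
            = (2 / (d : ℝ)) ^ 2 * (2 * ((d : ℝ) ^ 3 - 1) / d) by field_simp; ring,
        Real.sqrt_mul (by positivity), Real.sqrt_sq (by positivity)]
end

section
/- (Lemma 1) Let ρ = ρ₁ ⊗ ρ₂ ⊗ ρ₃ ⊗ ρ₄ be a pure fully separable density matrix on (ℂ^d)^{⊗4} (each ρ_f a density matrix on ℂ^d). Then for every k = 1,…,d²−1, the Ky Fan k-norm of the matricization T_{1|2|3|4} equals 4(d−1)²/d². -/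
open Matrix ComplexOrder

/-- The singular values of a real matrix `M`: square roots of eigenvalues of `Mᴴ * M`. -/
noncomputable def singVals {α β : Type*} [Fintype α] [Fintype β] [DecidableEq β]
    (M : Matrix α β ℝ) : β → ℝ :=
  fun i => Real.sqrt ((Matrix.isHermitian_conjTranspose_mul_self M).eigenvalues i)

/-- The Ky Fan `k`-norm of a real matrix: the sum of its `k` largest singular values
(realized as the largest sum of singular values over index sets of size at most `k`). -/
noncomputable def kyFan {α β : Type*} [Fintype α] [Fintype β] [DecidableEq β]
    (k : ℕ) (M : Matrix α β ℝ) : ℝ :=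
  (Finset.univ.powerset.filter (fun s : Finset β => s.card ≤ k)).sup'
    ⟨∅, by simp⟩ (fun s => ∑ i ∈ s, singVals M i)

/-!
For a product state the correlation tensor factorizes, `t = r₁ ⊗ r₂ ⊗ r₃ ⊗ r₄`, where
`r_f i = tr (ρ_f λ_i)` is the Bloch vector of the factor `ρ_f`. Hence `T_{1|2|3|4}` is the rank-one
matrix `r₁ (r₂ ⊗ r₃ ⊗ r₄)ᵀ`: its only nonzero singular value is `‖r₁‖ ‖r₂‖ ‖r₃‖ ‖r₄‖`, and every
Ky Fan norm with `k ≥ 1` equals it. Purity of `ρ` forces purity of every factor, because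
`tr ρ² = ∏ tr ρ_f²` with `0 ≤ tr ρ_f² ≤ 1`. Expanding a pure `ρ_f` in the trace-orthogonal basis
`{1, λ_1, …, λ_{d²-1}}` gives `1 = tr ρ_f² = 1/d + ‖r_f‖²/2`, so `‖r_f‖² = 2(d-1)/d`.
-/

theorem eq_one_of_prod_eq_one_of_le_one {ι R : Type*} [Fintype ι] [CommSemiring R]
    [PartialOrder R] [IsOrderedRing R] {f : ι → R} (h0 : 0 ≤ f) (h1 : f ≤ 1)
    (h : ∏ i, f i = 1) (i : ι) : f i = 1 := by
  classical
  refine le_antisymm (h1 i) ?_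
  calc 1 = f i * ∏ j ∈ Finset.univ.erase i, f j := by
        rw [Finset.mul_prod_erase _ _ (Finset.mem_univ i), h]
    _ ≤ f i := mul_le_of_le_one_right (h0 i) (Finset.prod_le_one (fun j _ => h0 j) fun j _ => h1 j)

theorem dotProduct_mul_prod {α β R : Type*} [Fintype α] [Fintype β] [CommSemiring R]
    (u u' : α → R) (v v' : β → R) :
    (fun c : α × β => u c.1 * v c.2) ⬝ᵥ (fun c => u' c.1 * v' c.2) = (u ⬝ᵥ u') * (v ⬝ᵥ v') := by
  simp only [dotProduct, Fintype.sum_prod_type, Finset.sum_mul_sum]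
  exact Finset.sum_congr rfl fun _ _ => Finset.sum_congr rfl fun _ _ => by ring

namespace Matrix

section KroneckerPi

variable {ι l m n R : Type*} [Fintype ι]

def kroneckerPi [CommMonoid R] (A : ι → Matrix m n R) : Matrix (ι → m) (ι → n) R :=
  of fun v w => ∏ j, A j (v j) (w j)

variable [DecidableEq ι] [Fintype m] [CommSemiring R]

theorem kroneckerPi_mul_kroneckerPi (A : ι → Matrix l m R) (B : ι → Matrix m n R) :
    kroneckerPi A * kroneckerPi B = kroneckerPi fun j => A j * B j := by
  ext v w
  simp only [kroneckerPi, mul_apply, of_apply, ← Finset.prod_mul_distrib]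
  exact (Fintype.prod_sum fun j p => A j (v j) p * B j p (w j)).symm

theorem trace_kroneckerPi (A : ι → Matrix m m R) : (kroneckerPi A).trace = ∏ j, (A j).trace :=
  (Fintype.prod_sum fun j p => A j p p).symm

end KroneckerPi

theorem IsHermitian.ofReal_re_trace_mul {m : Type*} [Fintype m] {B C : Matrix m m ℂ}
    (hB : B.IsHermitian) (hC : C.IsHermitian) : (((B * C).trace.re : ℝ) : ℂ) = (B * C).trace := by
  rw [← Complex.conj_eq_iff_re]
  change star (B * C).trace = _
  rw [← trace_conjTranspose, conjTranspose_mul, hB.eq, hC.eq, trace_mul_comm]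

section Trace

variable {m 𝕜 : Type*} [Fintype m] [DecidableEq m] [RCLike 𝕜] {A : Matrix m m 𝕜}

theorem IsHermitian.trace_mul_self (hA : A.IsHermitian) :
    (A * A).trace = ∑ i, ((hA.eigenvalues i ^ 2 : ℝ) : 𝕜) := by
  rw [← sq, ← cfc_pow_id (R := ℝ) A 2 hA.isSelfAdjoint, hA.cfc_eq, IsHermitian.cfc,
    Unitary.conjStarAlgAut_apply, trace_mul_cycle, Unitary.coe_star_mul_self, one_mul,
    trace_diagonal]
  rfl

theorem PosSemidef.trace_mul_self_mem_Icc (hA : A.PosSemidef) :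
    (A * A).trace ∈ Set.Icc 0 (A.trace ^ 2) := by
  have hμ := hA.eigenvalues_nonneg
  rw [hA.1.trace_mul_self, hA.1.trace_eq_sum_eigenvalues, ← RCLike.ofReal_sum,
    ← RCLike.ofReal_sum, ← RCLike.ofReal_pow, Set.mem_Icc, RCLike.ofReal_nonneg,
    RCLike.ofReal_le_ofReal]
  exact ⟨by positivity, Finset.sum_sq_le_sq_sum_of_nonneg fun i _ => hμ i⟩

end Trace

theorem trace_mul_self_eq_one_of_kroneckerPi_idempotent {ι m 𝕜 : Type*} [Fintype ι]
    [DecidableEq ι] [Fintype m] [DecidableEq m] [RCLike 𝕜] {A : ι → Matrix m m 𝕜}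
    (hA : ∀ j, (A j).PosSemidef ∧ (A j).trace = 1)
    (hidem : kroneckerPi A * kroneckerPi A = kroneckerPi A) (j : ι) : (A j * A j).trace = 1 := by
  refine eq_one_of_prod_eq_one_of_le_one (f := fun j => (A j * A j).trace)
    (fun j => (hA j).1.trace_mul_self_mem_Icc.1) (fun j => ?_) ?_ j
  · simpa [(hA j).2] using (hA j).1.trace_mul_self_mem_Icc.2
  · rw [← trace_kroneckerPi, ← kroneckerPi_mul_kroneckerPi, hidem, trace_kroneckerPi]
    exact Finset.prod_eq_one fun j _ => (hA j).2

theorem trace_mul_eq_sum_of_trace_mul_orthogonal {K ι n : Type*} [Field K] [Fintype ι]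
    [DecidableEq ι] [Fintype n] (b : ι → Matrix n n K) (c : ι → K) (hc : ∀ i, c i ≠ 0)
    (horth : ∀ i j, (b i * b j).trace = if i = j then c i else 0)
    (hcard : Fintype.card ι = Fintype.card n ^ 2) (M N : Matrix n n K) :
    (M * N).trace = ∑ i, (M * b i).trace * (N * b i).trace / c i := by
  have hcoeff : ∀ (a : ι → K) j, ((∑ i, a i • b i) * b j).trace = a j * c j := fun a j => by
    simp [Finset.sum_mul, trace_sum, horth]
  have hli : LinearIndependent K b := Fintype.linearIndependent_iff.mpr fun a ha j => by
    simpa [ha, hc j] using (hcoeff a j).symm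
  have hspan : Submodule.span K (Set.range b) = ⊤ :=
    hli.span_eq_top_of_card_eq_finrank' (by simp [hcard, sq, Module.finrank_matrix])
  obtain ⟨a, rfl⟩ := (Submodule.mem_span_range_iff_exists_fun K).mp
    (hspan ▸ Submodule.mem_top : N ∈ Submodule.span K (Set.range b))
  simp only [hcoeff, Finset.mul_sum, mul_smul_comm, trace_sum, trace_smul, smul_eq_mul]
  exact Finset.sum_congr rfl fun i _ => by field_simp [hc i]

end Matrix

open Matrix

section KyFan

variable {α β : Type*} [Fintype α] [Fintype β] [DecidableEq β]

theorem kyFan_eq_singVals_of_forall_ne {k : ℕ} (hk : 1 ≤ k) {M : Matrix α β ℝ} {i₀ : β}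
    (h : ∀ i ≠ i₀, singVals M i = 0) : kyFan k M = singVals M i₀ := by
  refine le_antisymm (Finset.sup'_le _ _ fun s _ => ?_) ?_
  · calc ∑ i ∈ s, singVals M i ≤ ∑ i, singVals M i :=
          Finset.sum_le_sum_of_subset_of_nonneg s.subset_univ fun i _ _ => Real.sqrt_nonneg _
      _ = singVals M i₀ := Finset.sum_eq_single i₀ (fun i _ hi => h i hi) (by simp)
  · exact Finset.le_sup'_of_le _ (b := {i₀}) (by simpa using hk) (by simp)

theorem kyFan_eq_sqrt_trace_of_rank_le_one [Nonempty β] {k : ℕ} (hk : 1 ≤ k)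
    {M : Matrix α β ℝ} (hM : M.rank ≤ 1) : kyFan k M = √(Mᴴ * M).trace := by
  set hN := isHermitian_conjTranspose_mul_self M
  have hcard : Fintype.card {i // hN.eigenvalues i ≠ 0} ≤ 1 :=
    hN.rank_eq_card_non_zero_eigs ▸ (rank_mul_le_right _ _).trans hM
  obtain ⟨i₀, hi₀⟩ : ∃ i₀, ∀ i ≠ i₀, hN.eigenvalues i = 0 := by
    by_cases h : ∃ i, hN.eigenvalues i ≠ 0
    · obtain ⟨i₀, h₀⟩ := h
      refine ⟨i₀, fun i hi => by_contra fun hne => hi ?_⟩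
      exact congrArg Subtype.val (Fintype.card_le_one_iff.mp hcard ⟨i, hne⟩ ⟨i₀, h₀⟩)
    · push Not at h
      exact ⟨Classical.arbitrary β, fun i _ => h i⟩
  have htrace : (Mᴴ * M).trace = hN.eigenvalues i₀ := by
    rw [hN.trace_eq_sum_eigenvalues, Finset.sum_eq_single i₀
      (fun i _ hi => RCLike.ofReal_eq_zero.mpr (hi₀ i hi)) (by simp)]
    rfl
  rw [kyFan_eq_singVals_of_forall_ne hk fun i hi => by
    rw [singVals, ← Real.sqrt_zero]; exact congrArg _ (hi₀ i hi), htrace]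
  rfl

theorem kyFan_vecMulVec [Nonempty β] {k : ℕ} (hk : 1 ≤ k) (x : α → ℝ) (y : β → ℝ) :
    kyFan k (vecMulVec x y) = √((x ⬝ᵥ x) * (y ⬝ᵥ y)) := by
  rw [kyFan_eq_sqrt_trace_of_rank_le_one hk (rank_vecMulVec_le x y), conjTranspose_vecMulVec,
    vecMulVec_mul_vecMulVec, trace_vecMulVec, dotProduct_smul, smul_eq_mul]
  simp only [star_trivial]

end KyFan

section Bloch

variable {d : ℕ} (lam : Fin (d ^ 2 - 1) → Matrix (Fin d) (Fin d) ℂ)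

def blochVector (M : Matrix (Fin d) (Fin d) ℂ) : Fin (d ^ 2 - 1) → ℝ :=
  fun i => (M * lam i).trace.re

variable {lam}

theorem trace_mul_self_eq_inv_add_sum_sq (hd : d ≠ 0) (htr : ∀ i, (lam i).trace = 0)
    (horth : ∀ i j, (lam i * lam j).trace = if i = j then 2 else 0)
    {M : Matrix (Fin d) (Fin d) ℂ} (hM : M.trace = 1) :
    (M * M).trace = 1 / d + ∑ i, (M * lam i).trace ^ 2 / 2 := by
  -- the basis `{1, λ_1, …}` indexed by `Option`: `none` is the identity, `some i` is `λ_i`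
  have hbasis := trace_mul_eq_sum_of_trace_mul_orthogonal
    (fun o : Option (Fin (d ^ 2 - 1)) => o.elim 1 lam) (fun o => o.elim (d : ℂ) fun _ => 2)
    (by rintro (_ | _) <;> simp [hd]) (by rintro (_ | i) (_ | j) <;> simp [htr, horth])
    (by simp [Nat.sub_add_cancel (Nat.one_le_pow 2 d (Nat.pos_of_ne_zero hd))]) M M
  simpa [Fintype.sum_option, hM, sq] using hbasis

theorem blochVector_dotProduct_self_of_pure (hd : d ≠ 0) (hherm : ∀ i, (lam i).IsHermitian)
    (htr : ∀ i, (lam i).trace = 0)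
    (horth : ∀ i j, (lam i * lam j).trace = if i = j then 2 else 0)
    {M : Matrix (Fin d) (Fin d) ℂ} (hM : M.IsHermitian) (htrM : M.trace = 1)
    (hpure : (M * M).trace = 1) :
    blochVector lam M ⬝ᵥ blochVector lam M = 2 - 2 / d := by
  have h := trace_mul_self_eq_inv_add_sum_sq hd htr horth htrM
  apply Complex.ofReal_injective
  push_cast [dotProduct, blochVector]
  simp_rw [hM.ofReal_re_trace_mul (hherm _), ← sq]
  rw [hpure, ← Finset.sum_div] at h
  linear_combination (-2 : ℂ) * h

theorem corrFull_kroneckerPi {n : ℕ} (hherm : ∀ i, (lam i).IsHermitian)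
    {ρs : Fin n → Matrix (Fin d) (Fin d) ℂ} (hρs : ∀ j, (ρs j).IsHermitian)
    (a : Fin n → Fin (d ^ 2 - 1)) :
    corrFull lam (kroneckerPi ρs) a = ∏ j, blochVector lam (ρs j) (a j) := by
  change (kroneckerPi ρs * kroneckerPi fun j => lam (a j)).trace.re = _
  rw [kroneckerPi_mul_kroneckerPi, trace_kroneckerPi,
    Finset.prod_congr rfl fun j _ => ((hρs j).ofReal_re_trace_mul (hherm (a j))).symm,
    ← Complex.ofReal_prod, Complex.ofReal_re]
  rfl

end Bloch

theorem kyFan_T_of_pure_fully_separable_general (d : ℕ) (hd : 2 ≤ d)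
    (lam : Fin (d ^ 2 - 1) → Matrix (Fin d) (Fin d) ℂ)
    (hherm : ∀ i, (lam i).IsHermitian)
    (htr : ∀ i, (lam i).trace = 0)
    (horth : ∀ i j, (lam i * lam j).trace = if i = j then 2 else 0)
    (ρs : Fin 4 → Matrix (Fin d) (Fin d) ℂ)
    (hρs : ∀ f, (ρs f).PosSemidef ∧ (ρs f).trace = 1)
    (ρ : Matrix (Fin 4 → Fin d) (Fin 4 → Fin d) ℂ)
    (hprod : ∀ v w, ρ v w = ∏ j, ρs j (v j) (w j))
    (hpure : ρ * ρ = ρ)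
    (k : ℕ) (hk1 : 1 ≤ k) :
    kyFan k (Matrix.of fun (r : Fin (d ^ 2 - 1))
        (c : Fin (d ^ 2 - 1) × Fin (d ^ 2 - 1) × Fin (d ^ 2 - 1)) =>
        corrFull lam ρ ![r, c.1, c.2.1, c.2.2])
      = 4 * ((d : ℝ) - 1) ^ 2 / (d : ℝ) ^ 2 := by
  obtain rfl : ρ = kroneckerPi ρs := Matrix.ext hprod
  set r : Fin 4 → Fin (d ^ 2 - 1) → ℝ := fun f => blochVector lam (ρs f)
  have hr : ∀ f, r f ⬝ᵥ r f = 2 - 2 / d := fun f =>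
    blochVector_dotProduct_self_of_pure (by omega) hherm htr horth (hρs f).1.1 (hρs f).2
      (trace_mul_self_eq_one_of_kroneckerPi_idempotent hρs hpure f)
  have hT : (of fun i (c : _ × _ × _) => corrFull lam (kroneckerPi ρs) ![i, c.1, c.2.1, c.2.2]) =
      vecMulVec (r 0) fun c => r 1 c.1 * (r 2 c.2.1 * r 3 c.2.2) := by
    ext i c
    rw [of_apply, corrFull_kroneckerPi hherm fun f => (hρs f).1.1, Fin.prod_univ_four,
      vecMulVec_apply]
    simp [r, mul_assoc]
  have : Nonempty (Fin (d ^ 2 - 1)) :=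
    ⟨⟨0, Nat.sub_pos_of_lt (Nat.one_lt_pow two_ne_zero (by omega))⟩⟩
  rw [hT, kyFan_vecMulVec hk1, dotProduct_mul_prod (r 1) (r 1)
    (fun p : _ × Fin (d ^ 2 - 1) => r 2 p.1 * r 3 p.2) (fun p => r 2 p.1 * r 3 p.2),
    dotProduct_mul_prod, hr, hr, hr, hr,
    show ∀ x : ℝ, x * (x * (x * x)) = (x ^ 2) ^ 2 by intro x; ring, Real.sqrt_sq (sq_nonneg _)]
  field_simp
  ring

/-- (Lemma 1) For a pure fully separable four-partite state, all Ky Fan `k`-norms of the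
matricization `T_{1|2|3|4}` equal `4(d-1)²/d²`. -/
theorem kyFan_T_of_pure_fully_separable (d : ℕ) (hd : 2 ≤ d)
    (lam : Fin (d ^ 2 - 1) → Matrix (Fin d) (Fin d) ℂ)
    (hherm : ∀ i, (lam i).IsHermitian)
    (htr : ∀ i, (lam i).trace = 0)
    (horth : ∀ i j, (lam i * lam j).trace = if i = j then 2 else 0)
    (ρs : Fin 4 → Matrix (Fin d) (Fin d) ℂ)
    (hρs : ∀ f, (ρs f).PosSemidef ∧ (ρs f).trace = 1)
    (ρ : Matrix (Fin 4 → Fin d) (Fin 4 → Fin d) ℂ)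
    (hprod : ∀ v w, ρ v w = ∏ j, ρs j (v j) (w j))
    (hpure : ρ * ρ = ρ)
    (k : ℕ) (hk1 : 1 ≤ k) (hk2 : k ≤ d ^ 2 - 1) :
    kyFan k (Matrix.of fun (r : Fin (d ^ 2 - 1))
        (c : Fin (d ^ 2 - 1) × Fin (d ^ 2 - 1) × Fin (d ^ 2 - 1)) =>
        corrFull lam ρ ![r, c.1, c.2.1, c.2.2])
      = 4 * ((d : ℝ) - 1) ^ 2 / (d : ℝ) ^ 2 :=
  kyFan_T_of_pure_fully_separable_general d hd lam hherm htr horth ρs hρs ρ hprod hpure k hk1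
end

section
/- Let n ≥ 2 and let ρ be a pure density matrix on (ℂ^d)^{⊗n}. Then the full correlation tensor satisfies Σ_{i₁,…,i_n=1}^{d²−1} (t_{i₁…i_n}^{(1,…,n)})² ≤ 2ⁿ(dⁿ−1)/dⁿ; equivalently ‖T^{(1,…,n)}‖ ≤ √(2ⁿ(dⁿ−1)/dⁿ). -/
/-! In the Hilbert–Schmidt inner product `⟪A, B⟫ = tr (Aᴴ B)` the identity and the tensor
products `σ_a = λ_{a 1} ⊗ ⋯ ⊗ λ_{a n}` are pairwise orthogonal, with `‖1‖² = dⁿ` and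
`‖σ_a‖² = 2ⁿ`; the `σ_a` are traceless because `n ≥ 1`. For a pure state `‖ρ‖² = tr ρ² = 1`, and
Bessel's inequality gives `1 / dⁿ + Σ_a t_a² / 2ⁿ ≤ 1`. -/

open Matrix ComplexOrder

section Bessel

variable {𝕜 E ι : Type*} [RCLike 𝕜] [NormedAddCommGroup E] [InnerProductSpace 𝕜 E]

theorem sum_norm_inner_sq_div_norm_sq_le [Fintype ι] {v : ι → E}
    (hv : Pairwise fun i j => inner 𝕜 (v i) (v j) = 0) (x : E) :
    ∑ i, ‖inner 𝕜 (v i) x‖ ^ 2 / ‖v i‖ ^ 2 ≤ ‖x‖ ^ 2 := by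
  classical
  let u : {i // v i ≠ 0} → E := fun i => ((‖v i‖ : 𝕜)⁻¹) • v i
  have hu : Orthonormal 𝕜 u := by
    rw [orthonormal_iff_ite]
    rintro ⟨i, hi⟩ ⟨j, hj⟩
    by_cases hij : i = j
    · subst hij
      simp [u, norm_smul, hi]
    · simp [u, inner_smul_left, inner_smul_right, hv hij, hij]
  calc ∑ i, ‖inner 𝕜 (v i) x‖ ^ 2 / ‖v i‖ ^ 2
      = ∑ i ∈ Finset.univ.filter (fun i => v i ≠ 0), ‖inner 𝕜 (v i) x‖ ^ 2 / ‖v i‖ ^ 2 := by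
        refine (Finset.sum_filter_of_ne ?_).symm
        rintro i - h hi
        simp [hi] at h
    _ = ∑ i, ‖inner 𝕜 (u i) x‖ ^ 2 := by
        rw [Finset.sum_subtype (p := fun i => v i ≠ 0) _ (fun i => by simp)]
        refine Finset.sum_congr rfl fun i _ => ?_
        simp [u, inner_smul_left, div_eq_inv_mul, mul_pow]
    _ ≤ ‖x‖ ^ 2 := hu.sum_inner_products_le x

end Bessel

namespace Matrix

section HilbertSchmidt

variable {𝕜 m n : Type*} [RCLike 𝕜] [Fintype m] [Fintype n]

def toL2 (A : Matrix m n 𝕜) : EuclideanSpace 𝕜 (m × n) :=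
  WithLp.toLp 2 fun p => A p.1 p.2

theorem inner_toL2 (A B : Matrix m n 𝕜) : inner 𝕜 A.toL2 B.toL2 = (Aᴴ * B).trace := by
  simp only [toL2, PiLp.inner_apply, RCLike.inner_apply', Fintype.sum_prod_type, trace, diag,
    mul_apply, conjTranspose_apply, RCLike.star_def]
  exact Finset.sum_comm

theorem norm_toL2_sq (A : Matrix m n 𝕜) : ‖A.toL2‖ ^ 2 = RCLike.re (Aᴴ * A).trace := by
  rw [← inner_toL2, inner_self_eq_norm_sq]

variable {κ : Type*} [Fintype κ] [DecidableEq m]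

theorem norm_trace_sq_div_card_add_sum_le_s12 (S : κ → Matrix m m 𝕜) {c : ℝ}
    (horth : Pairwise fun a b => ((S a)ᴴ * S b).trace = 0)
    (hnorm : ∀ a, ((S a)ᴴ * S a).trace = c) (htr : ∀ a, (S a).trace = 0) (ρ : Matrix m m 𝕜) :
    ‖ρ.trace‖ ^ 2 / Fintype.card m + (∑ a, ‖((S a)ᴴ * ρ).trace‖ ^ 2) / c
      ≤ RCLike.re (ρᴴ * ρ).trace := by
  let v : Option κ → EuclideanSpace 𝕜 (m × m) := fun o => toL2 (o.elim 1 S)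
  have hv : Pairwise fun i j => inner 𝕜 (v i) (v j) = 0 := by
    rintro (_ | a) (_ | b) hab
    · exact absurd rfl hab
    · simp [v, inner_toL2, htr]
    · simp [v, inner_toL2, trace_conjTranspose, htr]
    · simpa [v, inner_toL2] using horth (fun h => hab (congrArg some h))
  simpa [Fintype.sum_option, v, norm_toL2_sq, inner_toL2, Finset.sum_div, hnorm]
    using sum_norm_inner_sq_div_norm_sq_le hv (toL2 ρ)

theorem sum_re_trace_mul_sq_le_of_mul_self_eq {ρ : Matrix m m 𝕜} (hρ : ρ.IsHermitian)
    (hρtr : ρ.trace = 1) (hpure : ρ * ρ = ρ) (S : κ → Matrix m m 𝕜) {c : ℝ} (hc : 0 < c)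
    (hS : ∀ a, (S a).IsHermitian) (horth : Pairwise fun a b => ((S a)ᴴ * S b).trace = 0)
    (hnorm : ∀ a, ((S a)ᴴ * S a).trace = c) (htr : ∀ a, (S a).trace = 0) :
    ∑ a, RCLike.re (ρ * S a).trace ^ 2 ≤ c * (Fintype.card m - 1) / Fintype.card m := by
  have hcard : (Fintype.card m : ℝ) ≠ 0 := by
    have : Nonempty m := by
      by_contra h
      simp [not_nonempty_iff.mp h] at hρtr
    exact_mod_cast Fintype.card_ne_zero
  have hbessel := norm_trace_sq_div_card_add_sum_le_s12 S horth hnorm htr ρ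
  rw [hρ.eq, hpure, hρtr] at hbessel
  have hre : ∀ a, RCLike.re (ρ * S a).trace ^ 2 ≤ ‖((S a)ᴴ * ρ).trace‖ ^ 2 := fun a => by
    rw [(hS a).eq, trace_mul_comm, ← sq_abs]
    exact pow_le_pow_left₀ (abs_nonneg _) (RCLike.abs_re_le_norm _) 2
  simp only [norm_one, one_pow, RCLike.one_re] at hbessel
  calc ∑ a, RCLike.re (ρ * S a).trace ^ 2
      ≤ ∑ a, ‖((S a)ᴴ * ρ).trace‖ ^ 2 := Finset.sum_le_sum fun a _ => hre a
    _ ≤ c * (1 - 1 / Fintype.card m) := by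
        rw [← div_le_iff₀' hc]
        linarith
    _ = c * (Fintype.card m - 1) / Fintype.card m := by
        field_simp

end HilbertSchmidt

section PiKron

variable {ι m n p R : Type*} [Fintype ι]

def piKron [CommMonoid R] (A : ι → Matrix m n R) : Matrix (ι → m) (ι → n) R :=
  of fun v w => ∏ j, A j (v j) (w j)

theorem conjTranspose_piKron [CommSemiring R] [StarRing R] (A : ι → Matrix m n R) :
    (piKron A)ᴴ = piKron fun j => (A j)ᴴ := by
  ext v w
  simp [piKron]

theorem piKron_mul_piKron [DecidableEq ι] [Fintype n] [CommSemiring R] (A : ι → Matrix m n R)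
    (B : ι → Matrix n p R) : piKron A * piKron B = piKron fun j => A j * B j := by
  ext v w
  simp only [piKron, mul_apply, of_apply, Fintype.prod_sum, Finset.prod_mul_distrib]

theorem trace_piKron [DecidableEq ι] [Fintype m] [CommSemiring R] (A : ι → Matrix m m R) :
    (piKron A).trace = ∏ j, (A j).trace := by
  simp only [trace, diag, piKron, of_apply, Fintype.prod_sum]

theorem IsHermitian.piKron [CommSemiring R] [StarRing R] {A : ι → Matrix m m R}
    (hA : ∀ j, (A j).IsHermitian) : (piKron A).IsHermitian := by
  simp only [IsHermitian, conjTranspose_piKron, (hA _).eq]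

theorem trace_conjTranspose_piKron_mul_piKron [DecidableEq ι] [Fintype m] [Fintype n]
    [CommSemiring R] [StarRing R] (A B : ι → Matrix m n R) :
    ((piKron A)ᴴ * piKron B).trace = ∏ j, ((A j)ᴴ * B j).trace := by
  rw [conjTranspose_piKron, piKron_mul_piKron, trace_piKron]

end PiKron

end Matrix

theorem full_correlation_bound_multipartite_general (d : ℕ)
    (lam : Fin (d ^ 2 - 1) → Matrix (Fin d) (Fin d) ℂ)
    (hherm : ∀ i, (lam i).IsHermitian)
    (htr : ∀ i, (lam i).trace = 0)
    (horth : ∀ i j, (lam i * lam j).trace = if i = j then 2 else 0)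
    (n : ℕ) (hn : 2 ≤ n)
    (ρ : Matrix (Fin n → Fin d) (Fin n → Fin d) ℂ)
    (hpsd : ρ.PosSemidef) (htrρ : ρ.trace = 1) (hpure : ρ * ρ = ρ) :
    (∑ a : Fin n → Fin (d ^ 2 - 1), (corrFull lam ρ a) ^ 2)
        ≤ 2 ^ n * ((d : ℝ) ^ n - 1) / (d : ℝ) ^ n
    ∧ Real.sqrt (∑ a : Fin n → Fin (d ^ 2 - 1), (corrFull lam ρ a) ^ 2)
        ≤ Real.sqrt (2 ^ n * ((d : ℝ) ^ n - 1) / (d : ℝ) ^ n) := by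
  let σ : (Fin n → Fin (d ^ 2 - 1)) → Matrix (Fin n → Fin d) (Fin n → Fin d) ℂ :=
    fun a => piKron fun j => lam (a j)
  have hσσ : ∀ a b, ((σ a)ᴴ * σ b).trace = ∏ j, if a j = b j then 2 else 0 := fun a b => by
    simp only [σ, trace_conjTranspose_piKron_mul_piKron, (hherm _).eq, horth]
  have horthσ : Pairwise fun a b => ((σ a)ᴴ * σ b).trace = 0 := fun a b hab => by
    obtain ⟨j, hj⟩ := Function.ne_iff.mp hab
    rw [hσσ]
    exact Finset.prod_eq_zero (Finset.mem_univ j) (if_neg hj)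
  have hnormσ : ∀ a, ((σ a)ᴴ * σ a).trace = ((2 ^ n : ℝ) : ℂ) := fun a => by
    simp [hσσ]
  have htrσ : ∀ a, (σ a).trace = 0 := fun a =>
    (trace_piKron _).trans (Finset.prod_eq_zero (Finset.mem_univ ⟨0, by omega⟩) (htr _))
  have hcorr : ∀ a, corrFull lam ρ a = RCLike.re (ρ * σ a).trace := fun _ => rfl
  have hmain : (∑ a : Fin n → Fin (d ^ 2 - 1), (corrFull lam ρ a) ^ 2)
      ≤ 2 ^ n * ((d : ℝ) ^ n - 1) / (d : ℝ) ^ n := by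
    simp only [hcorr]
    simpa [Fintype.card_fun] using sum_re_trace_mul_sq_le_of_mul_self_eq hpsd.isHermitian htrρ
      hpure σ (c := 2 ^ n) (by positivity) (fun a => .piKron fun j => hherm _) horthσ hnormσ htrσ
  exact ⟨hmain, Real.sqrt_le_sqrt hmain⟩

/-- For a pure `n`-partite state, the full correlation tensor satisfies
`Σ (t^{(1,…,n)})² ≤ 2ⁿ(dⁿ-1)/dⁿ`; equivalently `‖T^{(1,…,n)}‖ ≤ √(2ⁿ(dⁿ-1)/dⁿ)`. -/
theorem full_correlation_bound_multipartite (d : ℕ) (hd : 2 ≤ d)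
    (lam : Fin (d ^ 2 - 1) → Matrix (Fin d) (Fin d) ℂ)
    (hherm : ∀ i, (lam i).IsHermitian)
    (htr : ∀ i, (lam i).trace = 0)
    (horth : ∀ i j, (lam i * lam j).trace = if i = j then 2 else 0)
    (n : ℕ) (hn : 2 ≤ n)
    (ρ : Matrix (Fin n → Fin d) (Fin n → Fin d) ℂ)
    (hpsd : ρ.PosSemidef) (htrρ : ρ.trace = 1) (hpure : ρ * ρ = ρ) :
    (∑ a : Fin n → Fin (d ^ 2 - 1), (corrFull lam ρ a) ^ 2)
        ≤ 2 ^ n * ((d : ℝ) ^ n - 1) / (d : ℝ) ^ n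
    ∧ Real.sqrt (∑ a : Fin n → Fin (d ^ 2 - 1), (corrFull lam ρ a) ^ 2)
        ≤ Real.sqrt (2 ^ n * ((d : ℝ) ^ n - 1) / (d : ℝ) ^ n) :=
  full_correlation_bound_multipartite_general d lam hherm htr horth n hn ρ hpsd htrρ hpure
end
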